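/- arXiv:1001.0610 — 7 statements merged into one kernel-verified Lean document; each statement's English description precedes it below -/
import Mathlib

section
/- Let ν be a probability distribution on the nonnegative integers, let Z have law ν, let α ∈ [0,1], let X be binomial with parameters Z and α (i.e., conditionally on Z = z, X ∼ Bin(z, α)), and let Y = Z − X. Define μ_k(l) = P(Y = l | X = k). Then ν is strongly log-concave (i.e., i·ν(i)² ≥ (i+1)·ν(i−1)·ν(i+1) for all i ≥ 1) if and only if for all k, l with the relevant conditional probabilities positive, μ_{k+1}(l+1)/μ_{k+1}(l) ≤ μ_k(l+1)/μ_k(l), equivalently ν(k+l+2)·C(k+l+2, k+1)·ν(k+l)·C(k+l, k) ≤ ν(k+l+1)²·C(k+l+1, k+1)·C(k+l+1, k). -/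
/-! Multiplying the ratio inequality at `(k, l)` by `n + 1`, where `n = k + l`, and using
`(n + 1) C(n+2, k+1) C(n, k) = (n + 2) C(n+1, k+1) C(n+1, k)`, all binomial coefficients
cancel and what is left is the strong log-concavity inequality of `ν` at `i = n + 1`.
In particular the inequality does not depend on `k`, so the case `k = 0` recovers it. -/

theorem Nat.add_one_mul_choose_mul_choose (n k : ℕ) :
    (n + 1) * ((n + 2).choose (k + 1) * n.choose k) =
      (n + 2) * ((n + 1).choose (k + 1) * (n + 1).choose k) := by
  calc (n + 1) * ((n + 2).choose (k + 1) * n.choose k)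
      = ((n + 1) * n.choose k) * (n + 2).choose (k + 1) := by ring
    _ = ((n + 2).choose (k + 1) * (k + 1)) * (n + 1).choose (k + 1) := by
      rw [Nat.add_one_mul_choose_eq]; ring
    _ = (n + 2) * ((n + 1).choose (k + 1) * (n + 1).choose k) := by
      rw [← Nat.add_one_mul_choose_eq]; ring

theorem choose_weighted_le_iff_slc_succ (ν : ℕ → ℝ) {n k : ℕ} (hk : k ≤ n) :
    ν (n + 2) * ((n + 2).choose (k + 1) : ℝ) * (ν n * (n.choose k : ℝ)) ≤
        ν (n + 1) * ((n + 1).choose (k + 1) : ℝ) * (ν (n + 1) * ((n + 1).choose k : ℝ)) ↔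
      ((n : ℝ) + 2) * ν n * ν (n + 2) ≤ ((n : ℝ) + 1) * ν (n + 1) ^ 2 := by
  have hchoose : ((n : ℝ) + 1) * (((n + 2).choose (k + 1) : ℝ) * (n.choose k : ℝ)) =
      ((n : ℝ) + 2) * (((n + 1).choose (k + 1) : ℝ) * ((n + 1).choose k : ℝ)) := by
    exact_mod_cast Nat.add_one_mul_choose_mul_choose n k
  set B : ℝ := ((n + 1).choose (k + 1) : ℝ) * ((n + 1).choose k : ℝ)
  have hB : 0 < B := by
    have := Nat.choose_pos (show k + 1 ≤ n + 1 by omega)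
    have := Nat.choose_pos (show k ≤ n + 1 by omega)
    positivity
  have hL : ((n : ℝ) + 1) * (ν (n + 2) * ((n + 2).choose (k + 1) : ℝ) * (ν n * (n.choose k : ℝ))) =
      ((n : ℝ) + 2) * ν n * ν (n + 2) * B := by
    linear_combination ν n * ν (n + 2) * hchoose
  have hR : ((n : ℝ) + 1) * (ν (n + 1) * ((n + 1).choose (k + 1) : ℝ) *
      (ν (n + 1) * ((n + 1).choose k : ℝ))) = ((n : ℝ) + 1) * ν (n + 1) ^ 2 * B := by
    ring
  rw [← mul_le_mul_iff_of_pos_left (show (0 : ℝ) < n + 1 by positivity), hL, hR,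
    mul_le_mul_iff_of_pos_right hB]

theorem slc_iff_conditional_ratio_general (ν : ℕ → ℝ) :
    (∀ i : ℕ, 1 ≤ i → (i : ℝ) * ν i ^ 2 ≥ ((i : ℝ) + 1) * ν (i - 1) * ν (i + 1)) ↔
    (∀ k l : ℕ,
      ν (k + l + 2) * ((k + l + 2).choose (k + 1) : ℝ) *
          (ν (k + l) * ((k + l).choose k : ℝ)) ≤
        ν (k + l + 1) * ((k + l + 1).choose (k + 1) : ℝ) *
          (ν (k + l + 1) * ((k + l + 1).choose k : ℝ))) := by
  have slc_succ (n : ℕ) : ((n + 1 : ℕ) : ℝ) * ν (n + 1) ^ 2 ≥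
      ((n + 1 : ℕ) + 1 : ℝ) * ν (n + 1 - 1) * ν (n + 1 + 1) ↔
      ((n : ℝ) + 2) * ν n * ν (n + 2) ≤ ((n : ℝ) + 1) * ν (n + 1) ^ 2 := by
    push_cast
    simp only [ge_iff_le]
    ring_nf
  constructor
  · intro h k l
    rw [choose_weighted_le_iff_slc_succ ν (Nat.le_add_right k l)]
    exact (slc_succ (k + l)).1 (h _ (Nat.le_add_left 1 _))
  · rintro h (_ | n) hi
    · omega
    · refine (slc_succ n).2 ((choose_weighted_le_iff_slc_succ ν (Nat.zero_le n)).1 ?_)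
      simpa using h 0 n

/-- For a probability distribution `ν` on `ℕ` and `α ∈ (0,1)`, with
`Z ∼ ν`, `X ∼ Bin(Z,α)`, `Y = Z - X`, strong log-concavity of `ν` is
equivalent to the ratio inequality
`μ_{k+1}(l+1)/μ_{k+1}(l) ≤ μ_k(l+1)/μ_k(l)` for the conditional laws
`μ_k(l) = P(Y = l | X = k)`, which rewrites (since
`P(X=k, Y=l) = ν(k+l)·C(k+l,k)·α^k·(1-α)^l`) as the displayed
binomial-coefficient inequality. -/
theorem slc_iff_conditional_ratio (ν : ℕ → ℝ) (hν0 : ∀ i, 0 ≤ ν i)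
    (hν1 : ∑' i, ν i = 1) (α : ℝ) (hα0 : 0 < α) (hα1 : α < 1) :
    (∀ i : ℕ, 1 ≤ i → (i : ℝ) * ν i ^ 2 ≥ ((i : ℝ) + 1) * ν (i - 1) * ν (i + 1)) ↔
    (∀ k l : ℕ,
      ν (k + l + 2) * ((k + l + 2).choose (k + 1) : ℝ) *
          (ν (k + l) * ((k + l).choose k : ℝ)) ≤
        ν (k + l + 1) * ((k + l + 1).choose (k + 1) : ℝ) *
          (ν (k + l + 1) * ((k + l + 1).choose k : ℝ))) :=
  slc_iff_conditional_ratio_general ν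
end

section
/- Let ν be a probability distribution on ℕ with no internal zeros in its support, let α ∈ (0,1), let Z ∼ ν, X ∼ Bin(Z, α), Y = Z − X. If ν is strongly log-concave, then Y is stochastically decreasing in X: for all k with P(X = k) > 0 and P(X = k+1) > 0 and all t, P(Y ≥ t | X = k+1) ≤ P(Y ≥ t | X = k). -/
/-!
Conditionally on `X = k`, the law of `Y` is proportional to `l ↦ p k l`. Writing `n = k + l`,
the identity `(k + 1) C(n + 1, k + 1) = (n + 1) C(n, k)` gives
`(k + 1) p (k + 1) l / p k l = α (n + 1) ν (n + 1) / ν n`, and strong log-concavity makes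
`n ↦ (n + 1) ν (n + 1) / ν n` decreasing, the absence of internal zeros letting the argument pass
through the zeros of `ν`. Hence `l ↦ p (k + 1) l / p k l` is decreasing: the law of `Y` given
`X = k + 1` is below the law given `X = k` in the likelihood-ratio order, which implies the
stochastic order.
-/

open Finset

def NoInternalZeros (ν : ℕ → ℝ) : Prop :=
  ∀ a b c : ℕ, a ≤ b → b ≤ c → 0 < ν a → 0 < ν c → 0 < ν b

def StronglyLogConcave (ν : ℕ → ℝ) : Prop :=
  ∀ i : ℕ, 1 ≤ i → (i : ℝ) * ν i ^ 2 ≥ ((i : ℝ) + 1) * ν (i - 1) * ν (i + 1)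

/-- `f / g` is antitone, cross-multiplied so that zeros are allowed. -/
def LikelihoodRatioLE (f g : ℕ → ℝ) : Prop :=
  ∀ l l', l ≤ l' → f l' * g l ≤ g l' * f l

section LikelihoodRatio

variable {f g : ℕ → ℝ}

theorem Summable.ite_le (hf : Summable f) (t : ℕ) :
    Summable fun l => if t ≤ l then f l else 0 :=
  (summable_nat_add_iff t).mp (by simpa using (summable_nat_add_iff t).mpr hf)

theorem tsum_eq_sum_range_add_tsum_ite (hf : Summable f) (t : ℕ) :
    ∑' l, f l = ∑ l ∈ range t, f l + ∑' l, if t ≤ l then f l else 0 := by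
  rw [← hf.sum_add_tsum_nat_add t, ← (hf.ite_le t).sum_add_tsum_nat_add t]
  simp +contextual [Finset.sum_eq_zero]

theorem LikelihoodRatioLE.tsum_ite_mul_sum_range_le (hfg : LikelihoodRatioLE f g)
    (hf : Summable f) (hg : Summable g) (t : ℕ) :
    (∑' l, if t ≤ l then f l else 0) * ∑ l ∈ range t, g l ≤
      (∑' l, if t ≤ l then g l else 0) * ∑ l ∈ range t, f l := by
  rw [mul_sum, mul_sum]
  refine sum_le_sum fun l hl => ?_
  rw [← tsum_mul_right, ← tsum_mul_right]
  refine Summable.tsum_le_tsum (fun l' => ?_) ((hf.ite_le t).mul_right _)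
    ((hg.ite_le t).mul_right _)
  split_ifs with hl'
  · exact hfg l l' (by simp at hl; omega)
  · simp

theorem LikelihoodRatioLE.tail_div_tsum_le (hfg : LikelihoodRatioLE f g)
    (hf0 : ∀ l, 0 ≤ f l) (hg0 : ∀ l, 0 ≤ g l) (hf : Summable f) (hg : Summable g)
    (hg_pos : 0 < ∑' l, g l) (t : ℕ) :
    (∑' l, if t ≤ l then f l else 0) / ∑' l, f l ≤
      (∑' l, if t ≤ l then g l else 0) / ∑' l, g l := by
  have hg_tail : 0 ≤ ∑' l, if t ≤ l then g l else 0 :=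
    tsum_nonneg fun l => by split_ifs <;> simp [hg0]
  refine div_le_of_le_mul₀ (tsum_nonneg hf0) (div_nonneg hg_tail hg_pos.le) ?_
  rw [div_mul_eq_mul_div, le_div_iff₀ hg_pos]
  have hcross := hfg.tsum_ite_mul_sum_range_le hf hg t
  rw [tsum_eq_sum_range_add_tsum_ite hf t, tsum_eq_sum_range_add_tsum_ite hg t]
  linarith

end LikelihoodRatio

/-- Cross-multiplied form of: `n ↦ (n + 1) ν (n + 1) / ν n` is antitone. -/
theorem StronglyLogConcave.succ_mul_ratio_antitone {ν : ℕ → ℝ} (hslc : StronglyLogConcave ν)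
    (hν0 : ∀ i, 0 ≤ ν i) (hniz : NoInternalZeros ν) {n n' : ℕ} (h : n ≤ n') :
    ((n' : ℝ) + 1) * ν (n' + 1) * ν n ≤ ((n : ℝ) + 1) * ν (n + 1) * ν n' := by
  induction n', h using Nat.le_induction with
  | base => exact le_rfl
  | succ m hnm ih =>
    push_cast
    rcases (hν0 (m + 1)).eq_or_lt with hzero | hpos
    · have hprod : ν n * ν (m + 1 + 1) = 0 := by
        by_contra hne
        exact (hniz n (m + 1) (m + 1 + 1) (by omega) (by omega)
          ((hν0 n).lt_of_ne (left_ne_zero_of_mul hne).symm)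
          ((hν0 _).lt_of_ne (right_ne_zero_of_mul hne).symm)).ne hzero
      rw [← hzero]
      linear_combination ((m : ℝ) + 1 + 1) * hprod
    · have hslc_m :
          ((m : ℝ) + 1 + 1) * ν m * ν (m + 1 + 1) ≤ ((m : ℝ) + 1) * ν (m + 1) ^ 2 := by
        simpa [add_assoc] using hslc (m + 1) (by omega)
      have hν_m2 : 0 ≤ ((m : ℝ) + 1 + 1) * ν (m + 1 + 1) := by
        have := hν0 (m + 1 + 1); positivity
      have hν_n1 : 0 ≤ ((n : ℝ) + 1) * ν (n + 1) := by
        have := hν0 (n + 1); positivity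
      refine le_of_mul_le_mul_right ?_ (show 0 < ((m : ℝ) + 1) * ν (m + 1) by positivity)
      calc ((m : ℝ) + 1 + 1) * ν (m + 1 + 1) * ν n * (((m : ℝ) + 1) * ν (m + 1))
          = ((m : ℝ) + 1 + 1) * ν (m + 1 + 1) * (((m : ℝ) + 1) * ν (m + 1) * ν n) := by ring
        _ ≤ ((m : ℝ) + 1 + 1) * ν (m + 1 + 1) * (((n : ℝ) + 1) * ν (n + 1) * ν m) :=
          mul_le_mul_of_nonneg_left ih hν_m2
        _ = ((n : ℝ) + 1) * ν (n + 1) * (((m : ℝ) + 1 + 1) * ν m * ν (m + 1 + 1)) := by ring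
        _ ≤ ((n : ℝ) + 1) * ν (n + 1) * (((m : ℝ) + 1) * ν (m + 1) ^ 2) :=
          mul_le_mul_of_nonneg_left hslc_m hν_n1
        _ = ((n : ℝ) + 1) * ν (n + 1) * ν (m + 1) * (((m : ℝ) + 1) * ν (m + 1)) := by ring

theorem choose_mul_pow_mul_pow_le_one {α : ℝ} (hα0 : 0 ≤ α) (hα1 : α ≤ 1) (k l : ℕ) :
    ((k + l).choose k : ℝ) * α ^ k * (1 - α) ^ l ≤ 1 := by
  have h1α : 0 ≤ 1 - α := by linarith
  have hbinom := (add_pow α (1 - α) (k + l)).symm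
  rw [add_sub_cancel, one_pow] at hbinom
  calc ((k + l).choose k : ℝ) * α ^ k * (1 - α) ^ l
      = α ^ k * (1 - α) ^ (k + l - k) * ((k + l).choose k : ℝ) := by
        rw [Nat.add_sub_cancel_left]; ring
    _ ≤ ∑ m ∈ range (k + l + 1), α ^ m * (1 - α) ^ (k + l - m) * ((k + l).choose m : ℝ) :=
        single_le_sum (f := fun m => α ^ m * (1 - α) ^ (k + l - m) * ((k + l).choose m : ℝ))
          (fun m _ => by positivity) (by simp)
    _ = 1 := hbinom

def thinningJoint (ν : ℕ → ℝ) (α : ℝ) (k l : ℕ) : ℝ :=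
  ν (k + l) * ((k + l).choose k : ℝ) * α ^ k * (1 - α) ^ l

section Thinning

variable {ν : ℕ → ℝ} {α : ℝ}

theorem thinningJoint_nonneg (hν0 : ∀ i, 0 ≤ ν i) (hα0 : 0 ≤ α) (hα1 : α ≤ 1) (k l : ℕ) :
    0 ≤ thinningJoint ν α k l := by
  have := hν0 (k + l)
  have : 0 ≤ 1 - α := by linarith
  unfold thinningJoint
  positivity

theorem summable_thinningJoint (hν0 : ∀ i, 0 ≤ ν i) (hν : Summable ν) (hα0 : 0 ≤ α)
    (hα1 : α ≤ 1) (k : ℕ) : Summable (thinningJoint ν α k) := by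
  refine Summable.of_nonneg_of_le (thinningJoint_nonneg hν0 hα0 hα1 k) (fun l => ?_)
    (hν.comp_injective (add_right_injective k))
  calc thinningJoint ν α k l
      = ν (k + l) * (((k + l).choose k : ℝ) * α ^ k * (1 - α) ^ l) := by
        unfold thinningJoint; ring
    _ ≤ ν (k + l) * 1 :=
        mul_le_mul_of_nonneg_left (choose_mul_pow_mul_pow_le_one hα0 hα1 k l) (hν0 _)
    _ = ν (k + l) := mul_one _

theorem succ_mul_thinningJoint_succ (k l : ℕ) :
    ((k : ℝ) + 1) * thinningJoint ν α (k + 1) l =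
      α * ((((k + l : ℕ) : ℝ) + 1) * ν (k + l + 1)) *
        (((k + l).choose k : ℝ) * α ^ k * (1 - α) ^ l) := by
  have hchoose : (((k + l + 1).choose (k + 1) * (k + 1) : ℕ) : ℝ) =
      ((k + l + 1) * (k + l).choose k : ℕ) :=
    congrArg Nat.cast (Nat.add_one_mul_choose_eq (k + l) k).symm
  unfold thinningJoint
  rw [show k + 1 + l = k + l + 1 by omega]
  push_cast at hchoose ⊢
  linear_combination (ν (k + l + 1) * α ^ (k + 1) * (1 - α) ^ l) * hchoose

theorem thinningJoint_likelihoodRatioLE (hν0 : ∀ i, 0 ≤ ν i) (hniz : NoInternalZeros ν)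
    (hslc : StronglyLogConcave ν) (hα0 : 0 ≤ α) (hα1 : α ≤ 1) (k : ℕ) :
    LikelihoodRatioLE (thinningJoint ν α (k + 1)) (thinningJoint ν α k) := by
  intro l l' hl
  set c : ℕ → ℝ := fun j => ((k + j).choose k : ℝ) * α ^ k * (1 - α) ^ j with hc
  have hc0 : 0 ≤ c l' * c l := by
    have : 0 ≤ 1 - α := by linarith
    positivity
  have hratio := hslc.succ_mul_ratio_antitone hν0 hniz (Nat.add_le_add_left hl k)
  refine le_of_mul_le_mul_left ?_ (show (0 : ℝ) < (k : ℝ) + 1 by positivity)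
  calc ((k : ℝ) + 1) * (thinningJoint ν α (k + 1) l' * thinningJoint ν α k l)
      = α * ((((k + l' : ℕ) : ℝ) + 1) * ν (k + l' + 1) * ν (k + l)) * (c l' * c l) := by
        rw [← mul_assoc, succ_mul_thinningJoint_succ, hc]; unfold thinningJoint; ring
    _ ≤ α * ((((k + l : ℕ) : ℝ) + 1) * ν (k + l + 1) * ν (k + l')) * (c l' * c l) :=
        mul_le_mul_of_nonneg_right (mul_le_mul_of_nonneg_left hratio hα0) hc0
    _ = ((k : ℝ) + 1) * (thinningJoint ν α k l' * thinningJoint ν α (k + 1) l) := by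
        rw [mul_left_comm ((k : ℝ) + 1), succ_mul_thinningJoint_succ, hc]
        unfold thinningJoint; ring

end Thinning

theorem slc_implies_stochastically_decreasing_general (ν : ℕ → ℝ) (hν0 : ∀ i, 0 ≤ ν i)
    (hν1 : ∑' i, ν i = 1)
    (hniz : ∀ a b c : ℕ, a ≤ b → b ≤ c → 0 < ν a → 0 < ν c → 0 < ν b)
    (hslc : ∀ i : ℕ, 1 ≤ i → (i : ℝ) * ν i ^ 2 ≥ ((i : ℝ) + 1) * ν (i - 1) * ν (i + 1))
    (α : ℝ) (hα0 : 0 < α) (hα1 : α < 1)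
    (p : ℕ → ℕ → ℝ)
    (hp : ∀ k l, p k l = ν (k + l) * ((k + l).choose k : ℝ) * α ^ k * (1 - α) ^ l)
    (k t : ℕ) (hXk : 0 < ∑' l, p k l) :
    (∑' l, if t ≤ l then p (k + 1) l else 0) / (∑' l, p (k + 1) l) ≤
      (∑' l, if t ≤ l then p k l else 0) / (∑' l, p k l) := by
  have hν : Summable ν := by
    by_contra h
    rw [tsum_eq_zero_of_not_summable h] at hν1
    exact zero_ne_one hν1
  obtain rfl : p = thinningJoint ν α := funext fun k => funext (hp k)
  exact (thinningJoint_likelihoodRatioLE hν0 hniz hslc hα0.le hα1.le k).tail_div_tsum_le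
    (thinningJoint_nonneg hν0 hα0.le hα1.le _) (thinningJoint_nonneg hν0 hα0.le hα1.le _)
    (summable_thinningJoint hν0 hν hα0.le hα1.le _)
    (summable_thinningJoint hν0 hν hα0.le hα1.le _)
    hXk t

/-- If `ν` is a strongly log-concave probability distribution on `ℕ` with no
internal zeros, `α ∈ (0,1)`, `Z ∼ ν`, `X ∼ Bin(Z,α)`, `Y = Z - X` (so the
joint law is `p k l = ν(k+l)·C(k+l,k)·α^k·(1-α)^l`), then `Y` is
stochastically decreasing in `X`. -/
theorem slc_implies_stochastically_decreasing (ν : ℕ → ℝ) (hν0 : ∀ i, 0 ≤ ν i)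
    (hν1 : ∑' i, ν i = 1)
    (hniz : ∀ a b c : ℕ, a ≤ b → b ≤ c → 0 < ν a → 0 < ν c → 0 < ν b)
    (hslc : ∀ i : ℕ, 1 ≤ i → (i : ℝ) * ν i ^ 2 ≥ ((i : ℝ) + 1) * ν (i - 1) * ν (i + 1))
    (α : ℝ) (hα0 : 0 < α) (hα1 : α < 1)
    (p : ℕ → ℕ → ℝ)
    (hp : ∀ k l, p k l = ν (k + l) * ((k + l).choose k : ℝ) * α ^ k * (1 - α) ^ l)
    (k t : ℕ) (hXk : 0 < ∑' l, p k l) (hXk1 : 0 < ∑' l, p (k + 1) l) :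
    (∑' l, if t ≤ l then p (k + 1) l else 0) / (∑' l, p (k + 1) l) ≤
      (∑' l, if t ≤ l then p k l else 0) / (∑' l, p k l) :=
  slc_implies_stochastically_decreasing_general ν hν0 hν1 hniz hslc α hα0 hα1 p hp k t hXk
end

section
/- Let G be a finite multigraph on vertex set V and for a,b ∈ ℕ^V let N(a,b) be the number of orientations of G with d⁺(x) ≥ a_x and d⁻(x) ≥ b_x for all x. If a + b = r + s (componentwise), then N(a,b)·N(r,s) ≥ N(a∨r, b∧s)·N(a∧r, b∨s), where ∨ and ∧ denote componentwise max and min. -/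
/-!
Count pairs of orientations instead of single ones. Sorting a pair `(o₁, o₂)` by the partial
orientation `κ` on which the two agree, `o₂` is the reverse of `o₁` on the free edges, so
`N(u₁, v₁) · N(u₂, v₂)` is a sum over `κ` of counts on the free subgraph whose thresholds are
`max (u₁ - h⁺) (v₂ - h⁻)` and `max (v₁ - h⁻) (u₂ - h⁺)`, with `h^±` the degrees contributed by `κ`.
For `a + b = r + s` the `κ`-terms of the two sides are `N(P ⊔ Q, P ⊓ Q)` and `N(P, Q)`, so
everything reduces to `N(p ⊔ q, p ⊓ q) ≤ N(p, q)`. Applying the same expansion to the squares of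
these two counts, the terms with `κ` not everywhere free compare by induction on the number of
edges, and the remaining term is the count itself; `A² - A ≤ B² - B` then gives `A ≤ B`, provided
`B > 0` whenever `A > 0`. That existence statement is proved by augmenting paths.
-/

open Finset
open scoped Classical

noncomputable section

namespace Multigraph

variable {V E : Type*} (fst snd : E → V)

def src (b : Bool) (e : E) : V := if b then fst e else snd e

def tgt (b : Bool) (e : E) : V := if b then snd e else fst e

@[simp] lemma src_not (b : Bool) (e : E) : src fst snd (!b) e = tgt fst snd b e := by
  cases b <;> rfl

@[simp] lemma tgt_not (b : Bool) (e : E) : tgt fst snd (!b) e = src fst snd b e := by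
  cases b <;> rfl

section Degrees

variable [Fintype E]

def outDeg (o : E → Bool) (x : V) : ℕ := #{e | src fst snd (o e) e = x}

def inDeg (o : E → Bool) (x : V) : ℕ := #{e | tgt fst snd (o e) e = x}

def Feasible (p q : V → ℤ) (o : E → Bool) : Prop :=
  ∀ x, p x ≤ outDeg fst snd o x ∧ q x ≤ inDeg fst snd o x

def count (p q : V → ℤ) : ℕ := #{o | Feasible fst snd p q o}

lemma outDeg_add_inDeg (o : E → Bool) (x : V) :
    outDeg fst snd o x + inDeg fst snd o x = #{e | fst e = x} + #{e | snd e = x} := by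
  simp only [outDeg, inDeg, card_filter, ← sum_add_distrib]
  refine sum_congr rfl fun e _ => ?_
  cases o e <;> simp [src, tgt, add_comm]

@[simp] lemma outDeg_not (o : E → Bool) (x : V) :
    outDeg fst snd (fun e => !o e) x = inDeg fst snd o x := by
  simp [outDeg, inDeg]

@[simp] lemma inDeg_not (o : E → Bool) (x : V) :
    inDeg fst snd (fun e => !o e) x = outDeg fst snd o x := by
  simp [outDeg, inDeg]

lemma count_comm (p q : V → ℤ) : count fst snd p q = count fst snd q p := by
  refine card_nbij' (fun o e => !o e) (fun o e => !o e) ?_ ?_ ?_ ?_ <;>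
    intro o ho <;> simp_all [Feasible, and_comm]

lemma count_comp_equiv {E' : Type*} [Fintype E'] (ι : E' ≃ E) (p q : V → ℤ) :
    count (fst ∘ ι) (snd ∘ ι) p q = count fst snd p q := by
  have hout (o : E' → Bool) (x : V) :
      outDeg (fst ∘ ι) (snd ∘ ι) o x = outDeg fst snd (o ∘ ι.symm) x := by
    unfold outDeg; exact card_equiv ι fun e => by simp only [mem_filter_univ]; simp [src]
  have hin (o : E' → Bool) (x : V) :
      inDeg (fst ∘ ι) (snd ∘ ι) o x = inDeg fst snd (o ∘ ι.symm) x := by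
    unfold inDeg; exact card_equiv ι fun e => by simp only [mem_filter_univ]; simp [tgt]
  have hfeas (o : E' → Bool) :
      Feasible (fst ∘ ι) (snd ∘ ι) p q o ↔ Feasible fst snd p q (o ∘ ι.symm) := by
    simp only [Feasible, hout, hin]
  exact card_equiv (ι.arrowCongr (Equiv.refl Bool)) fun o => by
    simp only [mem_filter_univ]
    exact hfeas o

lemma inDeg_update_not (o : E → Bool) (e₀ : E) (x : V) :
    inDeg fst snd (Function.update o e₀ (!o e₀)) x + (if tgt fst snd (o e₀) e₀ = x then 1 else 0)
      = inDeg fst snd o x + (if src fst snd (o e₀) e₀ = x then 1 else 0) := by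
  simp only [inDeg, card_filter]
  rw [← add_sum_erase _ _ (mem_univ e₀), ← add_sum_erase _ _ (mem_univ e₀),
    sum_congr rfl fun e he => by rw [Function.update_of_ne (ne_of_mem_erase he)]]
  simp only [Function.update_self, tgt_not]
  omega

end Degrees

section PartialOrientation

def agreement (o₁ o₂ : E → Bool) (e : E) : Option Bool :=
  if o₁ e = o₂ e then some (o₁ e) else none

def extend (κ : E → Option Bool) (τ : {e // κ e = none} → Bool) (e : E) : Bool :=
  if h : κ e = none then τ ⟨e, h⟩ else (κ e).getD false

lemma extend_of_eq_some {κ : E → Option Bool} (τ : {e // κ e = none} → Bool) {e : E} {b : Bool}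
    (h : κ e = some b) : extend κ τ e = b := by
  simp [extend, h]

lemma extend_restrict (κ : E → Option Bool) (τ : {e // κ e = none} → Bool) :
    (fun e : {e // κ e = none} => extend κ τ e) = τ := by
  funext e
  simp [extend, e.2]

lemma agreement_extend (κ : E → Option Bool) (τ : {e // κ e = none} → Bool) :
    agreement (extend κ τ) (extend κ fun e => !τ e) = κ := by
  funext e
  rcases h : κ e with _ | b
  · simp [agreement, extend, h]
  · simp [agreement, extend_of_eq_some _ h]

lemma extend_agreement {o₁ o₂ : E → Bool} {κ : E → Option Bool} (h : agreement o₁ o₂ = κ) :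
    extend κ (fun e => o₁ e) = o₁ ∧ extend κ (fun e => !o₁ e) = o₂ := by
  subst h
  constructor <;> funext e <;> by_cases he : o₁ e = o₂ e <;> simp [extend, agreement, he]
  revert he; cases o₁ e <;> cases o₂ e <;> simp

end PartialOrientation

section Splitting

variable [Fintype E]

def fixedOut (κ : E → Option Bool) (x : V) : ℕ :=
  #{e | ∃ b, κ e = some b ∧ src fst snd b e = x}

def fixedIn (κ : E → Option Bool) (x : V) : ℕ :=
  #{e | ∃ b, κ e = some b ∧ tgt fst snd b e = x}

def countFree (κ : E → Option Bool) (p q : V → ℤ) : ℕ :=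
  count (fun e : {e // κ e = none} => fst e) (fun e => snd e) p q

lemma card_filter_eq_fixed_add_free (f : Bool → E → V) (κ : E → Option Bool) (o : E → Bool)
    (ho : ∀ e b, κ e = some b → o e = b) (x : V) :
    #{e | f (o e) e = x} =
      #{e | ∃ b, κ e = some b ∧ f b e = x} + #{e : {e // κ e = none} | f (o e) e = x} := by
  have hfree : #{e : {e // κ e = none} | f (o e) e = x} = #{e | κ e = none ∧ f (o e) e = x} :=
    card_bij (fun e _ => e.1) (fun e he => by simp_all [e.2]) (fun _ _ _ _ => Subtype.ext)
      fun e he => by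
        simp only [mem_filter_univ] at he
        exact ⟨⟨e, he.1⟩, by simpa using he.2, rfl⟩
  rw [hfree, ← card_filter_add_card_filter_not (p := fun e => κ e ≠ none), filter_filter,
    filter_filter]
  congr 2
  · ext e
    rcases h : κ e with _ | b <;> simp [h, ho e, -Bool.exists_bool]
  · ext e
    simp [and_comm]

lemma outDeg_eq_fixedOut_add (κ : E → Option Bool) (o : E → Bool)
    (ho : ∀ e b, κ e = some b → o e = b) (x : V) :
    outDeg fst snd o x = fixedOut fst snd κ x +
      outDeg (fun e : {e // κ e = none} => fst e) (fun e => snd e) (fun e => o e) x :=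
  card_filter_eq_fixed_add_free (src fst snd) κ o ho x

lemma inDeg_eq_fixedIn_add (κ : E → Option Bool) (o : E → Bool)
    (ho : ∀ e b, κ e = some b → o e = b) (x : V) :
    inDeg fst snd o x = fixedIn fst snd κ x +
      inDeg (fun e : {e // κ e = none} => fst e) (fun e => snd e) (fun e => o e) x :=
  card_filter_eq_fixed_add_free (tgt fst snd) κ o ho x

lemma feasible_extend_iff (κ : E → Option Bool) (τ : {e // κ e = none} → Bool)
    (u₁ v₁ u₂ v₂ : V → ℤ) :
    Feasible fst snd u₁ v₁ (extend κ τ) ∧ Feasible fst snd u₂ v₂ (extend κ fun e => !τ e) ↔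
      Feasible (fun e : {e // κ e = none} => fst e) (fun e => snd e)
        (fun x => max (u₁ x - fixedOut fst snd κ x) (v₂ x - fixedIn fst snd κ x))
        (fun x => max (v₁ x - fixedIn fst snd κ x) (u₂ x - fixedOut fst snd κ x)) τ := by
  simp only [Feasible, ← forall_and]
  refine forall_congr' fun x => ?_
  rw [outDeg_eq_fixedOut_add fst snd κ _ (fun _ _ => extend_of_eq_some _),
    inDeg_eq_fixedIn_add fst snd κ _ (fun _ _ => extend_of_eq_some _),
    outDeg_eq_fixedOut_add fst snd κ _ (fun _ _ => extend_of_eq_some _),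
    inDeg_eq_fixedIn_add fst snd κ _ (fun _ _ => extend_of_eq_some _)]
  simp only [extend_restrict, outDeg_not, inDeg_not, max_le_iff]
  push_cast
  omega

theorem count_mul_count (u₁ v₁ u₂ v₂ : V → ℤ) :
    count fst snd u₁ v₁ * count fst snd u₂ v₂ =
      ∑ κ : E → Option Bool, countFree fst snd κ
        (fun x => max (u₁ x - fixedOut fst snd κ x) (v₂ x - fixedIn fst snd κ x))
        (fun x => max (v₁ x - fixedIn fst snd κ x) (u₂ x - fixedOut fst snd κ x)) := by
  rw [count, count, ← card_product,
    card_eq_sum_card_fiberwise (f := fun oo => agreement oo.1 oo.2) (t := univ)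
      fun _ _ => mem_univ _]
  refine sum_congr rfl fun κ _ => ?_
  refine card_nbij' (fun oo e => oo.1 e) (fun τ => (extend κ τ, extend κ fun e => !τ e))
    ?_ ?_ ?_ ?_
  · rintro ⟨o₁, o₂⟩ h
    simp only [mem_coe, mem_filter, mem_product, mem_univ, true_and] at h ⊢
    obtain ⟨h₁, h₂⟩ := extend_agreement h.2
    rw [← feasible_extend_iff, h₁, h₂]
    exact h.1
  · intro τ h
    simp only [mem_coe, mem_filter, mem_product, mem_univ, true_and] at h ⊢
    exact ⟨(feasible_extend_iff fst snd κ τ _ _ _ _).2 h, agreement_extend κ τ⟩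
  · rintro ⟨o₁, o₂⟩ h
    simp only [mem_coe, mem_filter, mem_product, mem_univ, true_and] at h
    obtain ⟨h₁, h₂⟩ := extend_agreement h.2
    simp [h₁, h₂]
  · intro τ _
    simp [extend_restrict]

end Splitting

section Walks

def Reach (o : E → Bool) : V → V → Prop :=
  Relation.ReflTransGen fun x y => ∃ e, src fst snd (o e) e = x ∧ tgt fst snd (o e) e = y

def IsWalk (o : E → Bool) : List E → V → V → Prop
  | [], x, z => x = z
  | e :: l, x, z => src fst snd (o e) e = x ∧ IsWalk o l (tgt fst snd (o e) e) z

variable {fst snd}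

lemma Reach.exists_isWalk {o : E → Bool} {x z : V} (h : Reach fst snd o x z) :
    ∃ l, IsWalk fst snd o l x z := by
  induction h using Relation.ReflTransGen.head_induction_on with
  | refl => exact ⟨[], rfl⟩
  | head hstep _ ih =>
    obtain ⟨l, hl⟩ := ih
    obtain ⟨e, rfl, rfl⟩ := hstep
    exact ⟨e :: l, rfl, hl⟩

lemma IsWalk.of_append {o : E → Bool} {l₁ l₂ : List E} {x z : V}
    (h : IsWalk fst snd o (l₁ ++ l₂) x z) : ∃ y, IsWalk fst snd o l₂ y z := by
  induction l₁ generalizing x with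
  | nil => exact ⟨x, h⟩
  | cons e l ih => exact ih h.2

variable [Fintype E]

/-- A walk that repeats an edge is first shortcut at the repetition. -/
lemma IsWalk.exists_reverse {o : E → Bool} {l : List E} {x z : V} (h : IsWalk fst snd o l x z) :
    ∃ o', (∀ e ∉ l, o' e = o e) ∧ ∀ y, inDeg fst snd o' y + (if z = y then 1 else 0) =
      inDeg fst snd o y + (if x = y then 1 else 0) := by
  induction hn : l.length using Nat.strong_induction_on generalizing l x with
  | _ n ih =>
  match l, h with
  | [], h => exact ⟨o, fun _ _ => rfl, fun y => by rw [show z = x from h.symm]⟩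
  | e :: l, ⟨hx, hl⟩ =>
    by_cases he : e ∈ l
    · obtain ⟨l₁, l₂, rfl⟩ := List.append_of_mem he
      obtain ⟨y, hy⟩ := hl.of_append
      have hshort : IsWalk fst snd o (e :: l₂) x z := ⟨hx, by rw [← hy.1] at hy; exact hy.2⟩
      obtain ⟨o', hagree, hdeg⟩ := ih _ (by subst hn; simp) hshort rfl
      refine ⟨o', fun e' he' => hagree e' fun h => he' ?_, hdeg⟩
      simp_all
    · obtain ⟨o₁, hagree, hdeg⟩ := ih l.length (by simp [← hn]) hl rfl
      have ho₁ : o₁ e = o e := hagree e he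
      refine ⟨Function.update o₁ e (!o e), fun e' he' => ?_, fun y => ?_⟩
      · rw [Function.update_of_ne (List.ne_of_not_mem_cons he')]
        exact hagree e' (List.not_mem_of_not_mem_cons he')
      · have hflip := inDeg_update_not fst snd o₁ e y
        rw [ho₁, hx] at hflip
        have := hdeg y
        omega

end Walks

section Existence

variable [Fintype E]

lemma card_src_mem_le_card_tgt_mem (o o' : E → Bool) (R : Finset V)
    (hR : ∀ e, src fst snd (o e) e ∈ R → tgt fst snd (o e) e ∈ R) :
    #{e | src fst snd (o' e) e ∈ R} ≤ #{e | tgt fst snd (o e) e ∈ R} := by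
  refine card_le_card fun e he => ?_
  have := hR e
  simp only [mem_filter_univ] at he ⊢
  cases ho : o e <;> cases ho' : o' e <;>
    simp only [src, tgt, ho, ho'] at this he ⊢ <;> tauto

variable [Fintype V]

/-- The set reachable from a vertex with an in-degree deficit receives every edge it touches,
so if it had no surplus anywhere it could not carry the out-degrees of `o₀`. -/
lemma exists_reach_lt_inDeg (o₀ o : E → Bool) (q : V → ℤ)
    (hq : ∀ x, q x ≤ outDeg fst snd o₀ x) {x₀ : V} (hx₀ : inDeg fst snd o x₀ < q x₀) :
    ∃ z, Reach fst snd o x₀ z ∧ q z < inDeg fst snd o z := by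
  by_contra! h
  set R : Finset V := {z | Reach fst snd o x₀ z}
  have hx₀R : x₀ ∈ R := (mem_filter_univ _).2 Relation.ReflTransGen.refl
  have hclosed : ∀ e, src fst snd (o e) e ∈ R → tgt fst snd (o e) e ∈ R := fun e he =>
    (mem_filter_univ _).2 (((mem_filter_univ _).1 he).tail ⟨e, rfl, rfl⟩)
  have hcard := card_src_mem_le_card_tgt_mem fst snd o o₀ R hclosed
  rw [← sum_card_fiberwise_eq_card_filter, ← sum_card_fiberwise_eq_card_filter] at hcard
  have : ∑ z ∈ R, (inDeg fst snd o z : ℤ) < ∑ z ∈ R, (outDeg fst snd o₀ z : ℤ) :=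
    calc ∑ z ∈ R, (inDeg fst snd o z : ℤ)
        < ∑ z ∈ R, q z :=
          sum_lt_sum (fun z hz => h z ((mem_filter_univ _).1 hz)) ⟨x₀, hx₀R, hx₀⟩
      _ ≤ ∑ z ∈ R, (outDeg fst snd o₀ z : ℤ) := sum_le_sum fun z _ => hq z
  exact absurd hcard (by exact_mod_cast this.not_ge)

def inDegDeficit (q : V → ℤ) (o : E → Bool) : ℕ := ∑ x, (q x - inDeg fst snd o x).toNat

lemma exists_feasible_inDegDeficit_lt {p q : V → ℤ} {o₀ o : E → Bool}
    (h₀ : Feasible fst snd (p ⊔ q) (p ⊓ q) o₀) (ho : Feasible fst snd p (p ⊓ q) o) {x₀ : V}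
    (hx₀ : inDeg fst snd o x₀ < q x₀) :
    ∃ o', Feasible fst snd p (p ⊓ q) o' ∧ inDegDeficit fst snd q o' < inDegDeficit fst snd q o := by
  obtain ⟨z, hz, hzq⟩ :=
    exists_reach_lt_inDeg fst snd o₀ o q (fun x => le_trans (le_max_right _ _) (h₀ x).1) hx₀
  obtain ⟨l, hl⟩ := hz.exists_isWalk
  obtain ⟨o', -, hrev⟩ := hl.exists_reverse
  have hxz : x₀ ≠ z := by rintro rfl; omega
  refine ⟨o', fun y => ?_, sum_lt_sum (fun y _ => ?_) ⟨x₀, mem_univ _, ?_⟩⟩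
  · have h₁ := hrev y
    have h₂ := outDeg_add_inDeg fst snd o' y
    have h₃ := outDeg_add_inDeg fst snd o y
    have h₄ := outDeg_add_inDeg fst snd o₀ y
    have h₅ := ho y
    have h₆ := h₀ y
    simp only [Pi.sup_apply, Pi.inf_apply] at h₅ h₆ ⊢
    split_ifs at h₁ <;> subst_vars <;> first | exact absurd rfl hxz | omega
  · have h₁ := hrev y
    split_ifs at h₁ <;> subst_vars <;> first | exact absurd rfl hxz | omega
  · have h₁ := hrev x₀
    rw [if_neg hxz.symm, if_pos rfl] at h₁
    omega

/-- Starting from `o₀`, which is feasible for `(p, p ⊓ q)`, the in-degree deficits with respect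
to `q` are removed one at a time by reversing a walk to a vertex with surplus in-degree. -/
theorem exists_feasible_of_feasible_sup_inf {p q : V → ℤ} {o₀ : E → Bool}
    (h₀ : Feasible fst snd (p ⊔ q) (p ⊓ q) o₀) : ∃ o, Feasible fst snd p q o := by
  suffices ∀ o, Feasible fst snd p (p ⊓ q) o → ∃ o, Feasible fst snd p q o from
    this o₀ fun x => ⟨le_trans (le_max_left _ _) (h₀ x).1, (h₀ x).2⟩
  intro o ho
  induction hn : inDegDeficit fst snd q o using Nat.strong_induction_on generalizing o with
  | _ n ih =>
  by_cases hdone : ∀ x, q x ≤ inDeg fst snd o x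
  · exact ⟨o, fun x => ⟨(ho x).1, hdone x⟩⟩
  push Not at hdone
  obtain ⟨x₀, hx₀⟩ := hdone
  obtain ⟨o', ho', hlt⟩ := exists_feasible_inDegDeficit_lt fst snd h₀ ho hx₀
  exact ih _ (hn ▸ hlt) o' ho' rfl

end Existence

section Sorting

variable [Fintype E]

lemma count_mul_self (u v : V → ℤ) :
    count fst snd u v * count fst snd u v = count fst snd u v +
      ∑ κ ∈ univ.erase fun _ => none, countFree fst snd κ
        (u - fun x => ((min (fixedOut fst snd κ x) (fixedIn fst snd κ x) : ℕ) : ℤ))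
        (v - fun x => ((min (fixedOut fst snd κ x) (fixedIn fst snd κ x) : ℕ) : ℤ)) := by
  nth_rw 2 [count_comm]
  rw [count_mul_count, ← add_sum_erase _ _ (mem_univ fun _ => none)]
  congr 1
  · have hout (x : V) : fixedOut fst snd (fun _ : E => none) x = 0 := by simp [fixedOut]
    have hin (x : V) : fixedIn fst snd (fun _ : E => none) x = 0 := by simp [fixedIn]
    simp only [hout, hin, CharP.cast_eq_zero, sub_zero, max_self]
    exact count_comp_equiv fst snd (Equiv.subtypeUnivEquiv fun _ => rfl) u v
  · refine sum_congr rfl fun κ _ => ?_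
    congr 1 <;> funext x <;> simp only [Pi.sub_apply] <;> omega

lemma le_of_mul_self_eq_add {A B S T : ℕ} (hA : A * A = A + S) (hB : B * B = B + T)
    (hST : S ≤ T) (hpos : 0 < A → 0 < B) : A ≤ B := by
  rcases Nat.eq_zero_or_pos A with rfl | hA₀
  · exact Nat.zero_le B
  · have := hpos hA₀
    nlinarith

variable [Fintype V]

theorem count_sup_inf_le (p q : V → ℤ) : count fst snd (p ⊔ q) (p ⊓ q) ≤ count fst snd p q := by
  induction hn : Fintype.card E using Nat.strong_induction_on generalizing E p q with
  | _ n ih =>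
  refine le_of_mul_self_eq_add (count_mul_self ..) (count_mul_self ..) ?_ fun hA => ?_
  · refine sum_le_sum fun κ hκ => ?_
    obtain ⟨e₀, he₀⟩ := Function.ne_iff.1 (mem_erase.1 hκ).1
    rw [sup_sub, inf_sub]
    exact ih _ (hn ▸ Fintype.card_subtype_lt (p := fun e => κ e = none) he₀) _ _ _ _ rfl
  · obtain ⟨o₀, ho₀⟩ := card_pos.1 hA
    obtain ⟨o, ho⟩ := exists_feasible_of_feasible_sup_inf fst snd ((mem_filter_univ _).1 ho₀)
    exact card_pos.2 ⟨o, (mem_filter_univ _).2 ho⟩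

theorem count_mul_count_le (a b r s : V → ℤ) (h : a + b = r + s) :
    count fst snd (a ⊔ r) (b ⊓ s) * count fst snd (a ⊓ r) (b ⊔ s) ≤
      count fst snd a b * count fst snd r s := by
  rw [count_mul_count, count_mul_count]
  refine sum_le_sum fun κ _ => ?_
  set P : V → ℤ := fun x => max (a x - fixedOut fst snd κ x) (s x - fixedIn fst snd κ x)
  set Q : V → ℤ := fun x => max (b x - fixedIn fst snd κ x) (r x - fixedOut fst snd κ x)
  have hsup : (fun x => max ((a ⊔ r) x - fixedOut fst snd κ x)
      ((b ⊔ s) x - fixedIn fst snd κ x)) = P ⊔ Q := by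
    funext x
    simp only [P, Q, Pi.sup_apply]
    omega
  have hinf : (fun x => max ((b ⊓ s) x - fixedIn fst snd κ x)
      ((a ⊓ r) x - fixedOut fst snd κ x)) = P ⊓ Q := by
    funext x
    have hx := congrFun h x
    simp only [P, Q, Pi.inf_apply, Pi.add_apply] at hx ⊢
    omega
  rw [hsup, hinf]
  exact count_sup_inf_le _ _ P Q

end Sorting

end Multigraph

end

/-- Negative-lattice-type inequality for orientation counts: with the same
setup as for the orientation lemma (multigraph via `fst, snd : E → V`,
orientations `o : E → Bool`, `N a b` the number of orientations with
`d⁺ ≥ a`, `d⁻ ≥ b` pointwise), if `a + b = r + s` componentwise then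
`N(a,b)·N(r,s) ≥ N(a∨r, b∧s)·N(a∧r, b∨s)`. -/
theorem orientation_count_nlc {V E : Type*} [Fintype V] [Fintype E]
    (fst snd : E → V)
    (dplus dminus : (E → Bool) → V → ℕ)
    (hdp : ∀ o x, dplus o x =
      (univ.filter (fun e => (o e = true ∧ fst e = x) ∨ (o e = false ∧ snd e = x))).card)
    (hdm : ∀ o x, dminus o x =
      (univ.filter (fun e => (o e = true ∧ snd e = x) ∨ (o e = false ∧ fst e = x))).card)
    (N : (V → ℕ) → (V → ℕ) → ℕ)
    (hN : ∀ a b, N a b =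
      (univ.filter (fun o : E → Bool => ∀ x, a x ≤ dplus o x ∧ b x ≤ dminus o x)).card)
    (a b r s : V → ℕ)
    (habrs : ∀ x, a x + b x = r x + s x) :
    N (fun x => max (a x) (r x)) (fun x => min (b x) (s x)) *
      N (fun x => min (a x) (r x)) (fun x => max (b x) (s x)) ≤
    N a b * N r s := by
  have hout (o : E → Bool) (x : V) : dplus o x = Multigraph.outDeg fst snd o x := by
    rw [hdp, Multigraph.outDeg]
    congr 1
    ext e
    simp only [mem_filter_univ]
    cases o e <;> simp [Multigraph.src]
  have hin (o : E → Bool) (x : V) : dminus o x = Multigraph.inDeg fst snd o x := by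
    rw [hdm, Multigraph.inDeg]
    congr 1
    ext e
    simp only [mem_filter_univ]
    cases o e <;> simp [Multigraph.tgt]
  have hcount (u v : V → ℕ) : N u v = Multigraph.count fst snd (fun x => u x) (fun x => v x) := by
    simp only [hN, Multigraph.count, Multigraph.Feasible, hout, hin, Nat.cast_le]
  simp only [hcount, Nat.cast_max, Nat.cast_min]
  exact Multigraph.count_mul_count_le fst snd _ _ _ _
    (funext fun x => by simp only [Pi.add_apply]; exact_mod_cast habrs x)
end

section
/- A subset C of ℕ^n is called convex if a, c ∈ C and a ≤ b ≤ c (componentwise) imply b ∈ C. Let m, n be positive integers, let γ ∈ ℝ≥0^{[m]×[n]}, let σ : [m] → [n] be random with P(σ) proportional to ∏_{i∈[m]} γ_{i,σ(i)}, let f ∈ ℕ^n, and for a ∈ ℕ^n let M_f(a) = P(a_j ≤ |σ^{-1}(j)| ≤ a_j + f_j for all j ∈ [n]). Then the support {a ∈ ℕ^n : M_f(a) > 0} is convex. -/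
open Finset
open scoped Classical

/-! `M_f(v) > 0` iff some `σ` with every `γ i (σ i) > 0` has all fiber sizes in the box
`[v, v + f]`. From such maps `σa` for `a` and `σc` for `c`, an exchange argument produces `ρ`
with `ρ i ∈ {σa i, σc i}` for every `i` and fiber sizes in `[b, b + f]`; each factor of the
weight of `ρ` is a factor of the weight of `σa` or of `σc`, so it is positive. -/

lemma card_filter_update_le {α β : Type*} [Fintype α] [DecidableEq α] [DecidableEq β]
    {ρ : α → β} {U : β → ℕ} (hρ : ∀ k, #{x | ρ x = k} ≤ U k) {j : β}
    (hj : #{x | ρ x = j} < U j) (i : α) (k : β) :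
    #{x | Function.update ρ i j x = k} ≤ U k := by
  by_cases hkj : k = j
  · subst hkj
    have hsub : ({x | Function.update ρ i k x = k} : Finset α) ⊆
        insert i ({x | ρ x = k} : Finset α) := by
      intro x hx
      by_cases hxi : x = i
      · simp [hxi]
      · simp_all
    have := (card_le_card hsub).trans (card_insert_le _ _)
    omega
  · refine le_trans (card_le_card fun x hx => ?_) (hρ k)
    by_cases hxi : x = i
    · subst hxi; simp_all
    · simp_all

/-- Among the maps agreeing with `τ` on a set `S` and with `σ` off it that respect the upper
bounds, take one with `S` maximal; if a lower bound failed at `k`, some point sent to `k` by `τ`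
could be moved into `S` without breaking an upper bound. -/
lemma exists_interpolant_card_fiber_bounds {α β : Type*} [Fintype α] [DecidableEq β]
    {σ τ : α → β} {L U : β → ℕ} (hLU : ∀ k, L k ≤ U k)
    (hσ : ∀ k, #{x | σ x = k} ≤ U k) (hτ : ∀ k, L k ≤ #{x | τ x = k}) :
    ∃ ρ : α → β, (∀ x, ρ x = σ x ∨ ρ x = τ x) ∧
      ∀ k, L k ≤ #{x | ρ x = k} ∧ #{x | ρ x = k} ≤ U k := by
  set good : Finset (Finset α) := {S | ∀ k, #{x | S.piecewise τ σ x = k} ≤ U k}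
  have hgood : (∅ : Finset α) ∈ good := by simpa [good] using hσ
  obtain ⟨S, hS, hmax⟩ := exists_max_image good card ⟨∅, hgood⟩
  rw [mem_filter] at hS
  refine ⟨S.piecewise τ σ, fun x => ?_, fun k => ⟨?_, hS.2 k⟩⟩
  · by_cases hx : x ∈ S <;> simp [hx]
  by_contra! hlow
  obtain ⟨i, hτi, hρi⟩ := exists_mem_notMem_of_card_lt_card (hlow.trans_le (hτ k))
  simp only [mem_filter, mem_univ, true_and] at hτi hρi
  have hiS : i ∉ S := fun hi => hρi (by simpa [hi] using hτi)
  have hinsert : insert i S ∈ good := by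
    simp only [good, mem_filter, mem_univ, true_and]
    rw [piecewise_insert, hτi]
    exact card_filter_update_le hS.2 (hlow.trans_le (hLU k)) i
  have := hmax _ hinsert
  rw [card_insert_of_notMem hiS] at this
  omega

lemma sum_div_sum_pos_iff {ι 𝕜 : Type*} [Fintype ι] [Field 𝕜] [LinearOrder 𝕜]
    [IsStrictOrderedRing 𝕜] {W : ι → 𝕜} (hW : ∀ x, 0 ≤ W x) (s : Finset ι) :
    0 < (∑ x ∈ s, W x) / ∑ x, W x ↔ ∃ x ∈ s, 0 < W x := by
  constructor
  · intro h
    have hnum : 0 < ∑ x ∈ s, W x := by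
      rcases div_pos_iff.1 h with ⟨hpos, -⟩ | ⟨hneg, -⟩
      · exact hpos
      · exact absurd hneg (sum_nonneg fun x _ => hW x).not_gt
    exact exists_lt_of_sum_lt (f := 0) (by simpa using hnum)
  · rintro ⟨x, hx, hWx⟩
    exact div_pos (sum_pos' (fun y _ => hW y) ⟨x, hx, hWx⟩)
      (sum_pos' (fun y _ => hW y) ⟨x, mem_univ x, hWx⟩)

lemma prod_ne_zero_of_forall_eq_or_eq {α β R : Type*} [Fintype α] [CommMonoidWithZero R]
    [Nontrivial R] [NoZeroDivisors R] {γ : α → β → R} {σ τ ρ : α → β}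
    (hσ : ∏ x, γ x (σ x) ≠ 0) (hτ : ∏ x, γ x (τ x) ≠ 0)
    (hρ : ∀ x, ρ x = σ x ∨ ρ x = τ x) :
    ∏ x, γ x (ρ x) ≠ 0 := by
  rw [prod_ne_zero_iff] at hσ hτ ⊢
  intro x hx
  rcases hρ x with h | h <;> rw [h]
  exacts [hσ x hx, hτ x hx]

theorem support_Mf_convex_general (m n : ℕ)
    (γ : Fin m → Fin n → ℝ) (hγ : ∀ i j, 0 ≤ γ i j)
    (W : (Fin m → Fin n) → ℝ) (hW : ∀ σ, W σ = ∏ i, γ i (σ i))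
    (f : Fin n → ℕ) (M : (Fin n → ℕ) → ℝ)
    (hM : ∀ a, M a =
      (∑ σ ∈ univ.filter (fun σ : Fin m → Fin n =>
          ∀ j, a j ≤ (univ.filter (fun i => σ i = j)).card ∧
            (univ.filter (fun i => σ i = j)).card ≤ a j + f j), W σ) /
        (∑ σ : Fin m → Fin n, W σ))
    (a b c : Fin n → ℕ) (hab : ∀ j, a j ≤ b j) (hbc : ∀ j, b j ≤ c j)
    (hMa : 0 < M a) (hMc : 0 < M c) :
    0 < M b := by
  have hWnn : ∀ σ, 0 ≤ W σ := fun σ => (hW σ).symm ▸ prod_nonneg fun i _ => hγ i (σ i)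
  rw [hM, sum_div_sum_pos_iff hWnn] at hMa hMc ⊢
  obtain ⟨σa, hσa, hWa⟩ := hMa
  obtain ⟨σc, hσc, hWc⟩ := hMc
  simp only [mem_filter, mem_univ, true_and] at hσa hσc ⊢
  obtain ⟨ρ, hmix, hρ⟩ := exists_interpolant_card_fiber_bounds (L := b) (U := b + f)
    (fun k => Nat.le_add_right _ _) (fun k => (hσa k).2.trans (by simp [hab k]))
    (fun k => (hbc k).trans (hσc k).1)
  refine ⟨ρ, hρ, (hWnn ρ).lt_of_ne' ?_⟩
  rw [hW] at hWa hWc ⊢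
  exact prod_ne_zero_of_forall_eq_or_eq hWa.ne' hWc.ne' hmix

/-- Convexity of the support of `M_f`: balls `i ∈ [m]` land in urns `j ∈ [n]`
independently with `P(σ(i)=j) ∝ γ i j`; `M_f(a)` is the probability that
`a_j ≤ |σ⁻¹(j)| ≤ a_j + f_j` for all `j`.  The support of `M_f` is convex. -/
theorem support_Mf_convex (m n : ℕ) (hm : 0 < m) (hn : 0 < n)
    (γ : Fin m → Fin n → ℝ) (hγ : ∀ i j, 0 ≤ γ i j)
    (hrow : ∀ i, 0 < ∑ j, γ i j)
    (W : (Fin m → Fin n) → ℝ) (hW : ∀ σ, W σ = ∏ i, γ i (σ i))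
    (f : Fin n → ℕ) (M : (Fin n → ℕ) → ℝ)
    (hM : ∀ a, M a =
      (∑ σ ∈ univ.filter (fun σ : Fin m → Fin n =>
          ∀ j, a j ≤ (univ.filter (fun i => σ i = j)).card ∧
            (univ.filter (fun i => σ i = j)).card ≤ a j + f j), W σ) /
        (∑ σ : Fin m → Fin n, W σ))
    (a b c : Fin n → ℕ) (hab : ∀ j, a j ≤ b j) (hbc : ∀ j, b j ≤ c j)
    (hMa : 0 < M a) (hMc : 0 < M c) :
    0 < M b :=
  support_Mf_convex_general m n γ hγ W hW f M hM a b c hab hbc hMa hMc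
end

section
/- Let σ, τ : [m] → [n] and suppose i ∈ [n] satisfies |σ^{-1}(i)| > |τ^{-1}(i)|. Then, viewing σ and τ as edge sets of bipartite graphs on [m] ∪ [n] (with ball k joined to urn σ(k), respectively τ(k)), there exists j ∈ [n] with |σ^{-1}(j)| < |τ^{-1}(j)| and a ρ : [m] → [n] such that ρ(k) ∈ {σ(k), τ(k)} for all k, |ρ^{-1}(i)| = |σ^{-1}(i)| − 1, |ρ^{-1}(j)| = |σ^{-1}(j)| + 1, and |ρ^{-1}(k)| = |σ^{-1}(k)| for all k ∈ [n] \ {i, j}. -/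
/-!
Regard each ball `a` with `σ a ≠ τ a` as an edge `σ a → τ a` between urns; the out-degree minus the
in-degree of an urn is its `σ`-occupancy minus its `τ`-occupancy. Starting at urn `i`, which has
positive excess, follow such edges, moving each traversed ball from its `σ`-urn to its `τ`-urn, until
an urn with negative excess is reached. Every move makes the assignment agree with `τ` on one more
ball, so this terminates, and each intermediate urn gains and loses one ball.
-/

open Finset

variable {α β : Type*} [Fintype α] [DecidableEq β]

def fiberCard (σ : α → β) (b : β) : ℕ := #{a | σ a = b}

theorem fiberCard_update_add_single [DecidableEq α] (σ : α → β) (a : α) (b : β) :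
    fiberCard (Function.update σ a b) + Pi.single (σ a) 1 = fiberCard σ + Pi.single b 1 := by
  ext c
  have hsplit : ∀ f : α → β, fiberCard f c = (if f a = c then 1 else 0) +
      ∑ x ∈ univ.erase a, if f x = c then 1 else 0 := fun f => by
    rw [fiberCard, card_filter, add_sum_erase _ (fun x => if f x = c then 1 else 0) (mem_univ a)]
  have hagree : ∑ x ∈ univ.erase a, (if Function.update σ a b x = c then 1 else 0) =
      ∑ x ∈ univ.erase a, if σ x = c then 1 else 0 :=
    sum_congr rfl fun x hx => by rw [Function.update_of_ne (ne_of_mem_erase hx)]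
  simp only [Pi.add_apply, hsplit, hagree, Function.update_self, Pi.single_apply, eq_comm (a := c)]
  split_ifs <;> omega

theorem hammingDist_update_lt [DecidableEq α] {σ τ : α → β} {a : α} (h : σ a ≠ τ a) :
    hammingDist (Function.update σ a (τ a)) τ < hammingDist σ τ := by
  refine card_lt_card ⟨fun x hx => ?_, fun hsub => ?_⟩
  · simp only [mem_filter, mem_univ, true_and] at hx ⊢
    rcases eq_or_ne x a with rfl | hxa
    · exact absurd (Function.update_self ..) hx
    · rwa [Function.update_of_ne hxa] at hx
  · simpa using hsub (show a ∈ _ by simpa using h)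

/-- The occupancy change is stated additively, as `ρ = σ - eᵢ + eⱼ` without truncated subtraction. -/
theorem exists_reroute [DecidableEq α] (σ τ : α → β) (i : β) (h : fiberCard τ i < fiberCard σ i) :
    ∃ (j : β) (ρ : α → β), fiberCard σ j < fiberCard τ j ∧ (∀ a, ρ a = σ a ∨ ρ a = τ a) ∧
      fiberCard ρ + Pi.single i 1 = fiberCard σ + Pi.single j 1 := by
  induction hd : hammingDist σ τ using Nat.strong_induction_on generalizing σ i with
  | _ d ih =>
  obtain ⟨a, hσa, hτa⟩ : ∃ a, σ a = i ∧ τ a ≠ i := by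
    simpa [fiberCard] using exists_mem_notMem_of_card_lt_card h
  set j₁ := τ a
  set ρ₀ := Function.update σ a j₁
  have hρ₀ : fiberCard ρ₀ + Pi.single i 1 = fiberCard σ + Pi.single j₁ 1 :=
    hσa ▸ fiberCard_update_add_single σ a j₁
  have hρ₀_mem (x : α) : ρ₀ x = σ x ∨ ρ₀ x = τ x := by
    rcases eq_or_ne x a with rfl | hx
    · exact Or.inr (Function.update_self ..)
    · exact Or.inl (Function.update_of_ne hx ..)
  by_cases hj₁ : fiberCard σ j₁ < fiberCard τ j₁
  · exact ⟨j₁, ρ₀, hj₁, hρ₀_mem, hρ₀⟩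
  have hρ₀i : fiberCard ρ₀ i + 1 = fiberCard σ i := by
    simpa [Pi.single_eq_of_ne hτa.symm] using congrFun hρ₀ i
  have hρ₀j₁ : fiberCard ρ₀ j₁ = fiberCard σ j₁ + 1 := by
    simpa [Pi.single_eq_of_ne hτa] using congrFun hρ₀ j₁
  obtain ⟨j, ρ, hj, hρ_mem, hρ⟩ :=
    ih _ (hd ▸ hammingDist_update_lt (hσa ▸ hτa.symm)) ρ₀ j₁ (by omega) rfl
  have hji : j ≠ i := by rintro rfl; omega
  have hρ₀j : fiberCard σ j ≤ fiberCard ρ₀ j := by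
    have := congrFun hρ₀ j
    rw [Pi.add_apply, Pi.add_apply, Pi.single_eq_of_ne hji, add_zero] at this
    omega
  refine ⟨j, ρ, hρ₀j.trans_lt hj, fun x => (hρ_mem x).elim (· ▸ hρ₀_mem x) Or.inr, ?_⟩
  refine add_right_cancel (b := Pi.single j₁ 1) ?_
  rw [add_right_comm, hρ, add_right_comm, hρ₀, add_right_comm]

/-- The alternating-path claim: if `σ, τ : [m] → [n]` and urn `i` has more
`σ`-balls than `τ`-balls, then there are an urn `j` with fewer `σ`-balls than
`τ`-balls and a `ρ : [m] → [n]` with `ρ(k) ∈ {σ(k), τ(k)}` for all `k`, whose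
urn occupancies agree with those of `σ` except that urn `i` loses one ball
and urn `j` gains one. -/
theorem alternating_path_claim (m n : ℕ) (σ τ : Fin m → Fin n) (i : Fin n)
    (h : (univ.filter (fun k => τ k = i)).card < (univ.filter (fun k => σ k = i)).card) :
    ∃ (j : Fin n) (ρ : Fin m → Fin n),
      (univ.filter (fun k => σ k = j)).card < (univ.filter (fun k => τ k = j)).card ∧
      (∀ k, ρ k = σ k ∨ ρ k = τ k) ∧
      (univ.filter (fun k => ρ k = i)).card = (univ.filter (fun k => σ k = i)).card - 1 ∧
      (univ.filter (fun k => ρ k = j)).card = (univ.filter (fun k => σ k = j)).card + 1 ∧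
      (∀ k : Fin n, k ≠ i → k ≠ j →
        (univ.filter (fun k' => ρ k' = k)).card = (univ.filter (fun k' => σ k' = k)).card) := by
  obtain ⟨j, ρ, hj, hρ_mem, hρ⟩ := exists_reroute σ τ i h
  have hji : j ≠ i := by rintro rfl; exact lt_asymm h hj
  refine ⟨j, ρ, hj, hρ_mem, ?_, ?_, fun k hki hkj => ?_⟩
  · have := congrFun hρ i
    simp only [Pi.add_apply, Pi.single_eq_same, Pi.single_eq_of_ne hji.symm, fiberCard] at this
    omega
  · simpa [Pi.single_eq_of_ne hji, fiberCard] using congrFun hρ j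
  · simpa [Pi.single_eq_of_ne hki, Pi.single_eq_of_ne hkj, fiberCard] using congrFun hρ k
end

section
/- Let m, n be positive integers, γ : [m]×[n] → ℝ≥0 with each row γ_i summing to 1, and let σ : [m] → [n] be random with the σ(i) independent and P(σ(i) = j) = γ_{ij}. Let B_i = |σ^{-1}(i)|. Then for any i ∈ [n], k ∈ ℕ, and any event Q determined by (σ^{-1}(j) : j ≠ i): P(B_i = k+1 and Q) = (1/(k+1)) · ∑_{l∈[m]} γ_{li} · P^{[m]∖{l}}(B_i = k and Q), where P^{[m]∖{l}} denotes the analogous independent measure on functions [m]∖{l} → [n] (with B_i and Q reinterpreted there). -/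
/-!
Double counting over pairs `(σ, l)` with `σ l = i`. A configuration `σ` with `B_i = k + 1`
occurs for exactly `k + 1` balls `l`; removing such a ball gives a configuration `τ` of the
other balls with `B_i = k`, the same fibres `σ⁻¹(j)` for `j ≠ i` (so `Q` is unchanged), and
weight `∏ γ = γ l i · ∏ γ`. Hence
`(k + 1) P(B_i = k + 1, Q) = ∑_l γ l i P^{[m]∖{l}}(B_i = k, Q)`.
-/

open Finset
open scoped Classical

theorem sum_sum_filter_apply_eq {α β M : Type*} [Fintype α] [Fintype β] [DecidableEq β]
    [AddCommMonoid M] (s : Finset (α → β)) (i : β) (F : (α → β) → M) :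
    ∑ l, ∑ σ ∈ s with σ l = i, F σ =
      ∑ σ ∈ s, #(univ.filter fun l => σ l = i) • F σ := by
  rw [sum_comm' (t' := s) (s' := fun σ => univ.filter fun l => σ l = i)]
  · simp only [sum_const]
  · simp [and_comm]

section

variable {α β : Type*} [Fintype α] [DecidableEq α] [DecidableEq β]

theorem image_val_filter_subtype_ne (σ : α → β) (l : α) (j : β) :
    (univ.filter fun x : {x // x ≠ l} => σ x = j).image Subtype.val =
      (univ.filter fun x => σ x = j).erase l := by
  ext x
  simp [and_comm]

theorem card_filter_subtype_ne_add_one {σ : α → β} {l : α} {i : β} (hl : σ l = i) :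
    #(univ.filter fun x : {x // x ≠ l} => σ x = i) + 1 = #(univ.filter fun x => σ x = i) := by
  rw [← card_image_of_injective _ Subtype.val_injective, image_val_filter_subtype_ne,
    card_erase_add_one (by simpa)]

theorem card_eq_and_iff_of_apply_eq {σ : α → β} {l : α} {i : β} (hl : σ l = i) (k : ℕ)
    (Q : (β → Finset α) → Prop)
    (hQ : ∀ S T : β → Finset α, (∀ j, j ≠ i → S j = T j) → (Q S ↔ Q T)) :
    (#(univ.filter fun x : {x // x ≠ l} => σ x = i) = k ∧
        Q fun j => (univ.filter fun x : {x // x ≠ l} => σ x = j).image Subtype.val) ↔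
      #(univ.filter fun x => σ x = i) = k + 1 ∧ Q fun j => univ.filter fun x => σ x = j := by
  refine and_congr (by rw [← card_filter_subtype_ne_add_one hl]; omega)
    (hQ _ _ fun j hj => ?_)
  rw [image_val_filter_subtype_ne, erase_eq_of_notMem]
  simp [hl, Ne.symm hj]

variable {R : Type*} [CommSemiring R] [Fintype β]

theorem mul_sum_subtype_ne_eq_sum_filter_apply_eq (w : α → β → R) (l : α) (i : β) (k : ℕ)
    (Q : (β → Finset α) → Prop)
    (hQ : ∀ S T : β → Finset α, (∀ j, j ≠ i → S j = T j) → (Q S ↔ Q T)) :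
    w l i * ∑ τ ∈ univ.filter (fun τ : {x // x ≠ l} → β =>
        #(univ.filter fun x => τ x = i) = k ∧
          Q fun j => (univ.filter fun x => τ x = j).image Subtype.val),
        ∏ x : {x // x ≠ l}, w x (τ x) =
      ∑ σ ∈ univ.filter (fun σ : α → β => #(univ.filter fun x => σ x = i) = k + 1 ∧
          Q fun j => univ.filter fun x => σ x = j) with σ l = i,
        ∏ x, w x (σ x) := by
  let e := Equiv.funSplitAt l β
  rw [mul_sum]
  refine sum_nbij' (fun τ => e.symm (i, τ)) (fun σ => (e σ).2) ?_ ?_ ?_ ?_ ?_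
  · intro τ hτ
    set σ := e.symm (i, τ)
    have hl : σ l = i := by simp [σ, e]
    have hres : (fun x : {x // x ≠ l} => σ x) = τ := funext fun x => by simp [σ, e, x.2]
    rw [← hres] at hτ
    simp only [mem_filter, mem_univ, true_and] at hτ ⊢
    exact ⟨(card_eq_and_iff_of_apply_eq hl k Q hQ).1 hτ, hl⟩
  · intro σ hσ
    simp only [mem_filter, mem_univ, true_and] at hσ
    simpa [card_eq_and_iff_of_apply_eq hσ.2 k Q hQ, e] using hσ.1
  · intro τ _
    simp [e]
  · intro σ hσ
    rw [mem_filter] at hσ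
    rw [← hσ.2]
    exact e.symm_apply_apply σ
  · intro τ _
    rw [Fintype.prod_eq_mul_prod_subtype_ne _ l]
    simp only [e, Equiv.funSplitAt_symm_apply, dite_true]
    exact congrArg _ (prod_congr rfl fun x _ => by simp [x.2])

theorem card_add_one_mul_sum_filter_eq_sum_mul_sum_subtype_ne (w : α → β → R) (i : β)
    (k : ℕ) (Q : (β → Finset α) → Prop)
    (hQ : ∀ S T : β → Finset α, (∀ j, j ≠ i → S j = T j) → (Q S ↔ Q T)) :
    ((k : R) + 1) * ∑ σ ∈ univ.filter (fun σ : α → β =>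
        #(univ.filter fun x => σ x = i) = k + 1 ∧ Q fun j => univ.filter fun x => σ x = j),
        ∏ x, w x (σ x) =
      ∑ l, w l i * ∑ τ ∈ univ.filter (fun τ : {x // x ≠ l} → β =>
          #(univ.filter fun x => τ x = i) = k ∧
            Q fun j => (univ.filter fun x => τ x = j).image Subtype.val),
          ∏ x : {x // x ≠ l}, w x (τ x) := by
  simp_rw [mul_sum_subtype_ne_eq_sum_filter_apply_eq w _ i k Q hQ]
  rw [sum_sum_filter_apply_eq, mul_sum]
  refine sum_congr rfl fun σ hσ => ?_
  rw [(mem_filter.1 hσ).2.1, nsmul_eq_mul, Nat.cast_add_one]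

end

theorem urn_recursion_general (m n : ℕ) (γ : Fin m → Fin n → ℝ)
    (i : Fin n) (k : ℕ)
    (Qhat : (Fin n → Finset (Fin m)) → Prop)
    (hQ : ∀ S T : Fin n → Finset (Fin m),
      (∀ j, j ≠ i → S j = T j) → (Qhat S ↔ Qhat T)) :
    (∑ σ ∈ univ.filter (fun σ : Fin m → Fin n =>
        (univ.filter (fun x => σ x = i)).card = k + 1 ∧
        Qhat (fun j => univ.filter (fun x => σ x = j))),
      ∏ x, γ x (σ x)) =
    (1 / ((k : ℝ) + 1)) * ∑ l : Fin m, γ l i *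
      (∑ τ ∈ univ.filter (fun τ : {x : Fin m // x ≠ l} → Fin n =>
          (univ.filter (fun x : {x : Fin m // x ≠ l} => τ x = i)).card = k ∧
          Qhat (fun j =>
            (univ.filter (fun x : {x : Fin m // x ≠ l} => τ x = j)).image
              Subtype.val)),
        ∏ x : {x : Fin m // x ≠ l}, γ x.1 (τ x)) := by
  rw [← card_add_one_mul_sum_filter_eq_sum_mul_sum_subtype_ne γ i k Qhat hQ, one_div,
    inv_mul_cancel_left₀ (by positivity)]

/-- Observation (L1): balls `x ∈ [m]` land independently in urns `j ∈ [n]`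
with `P(σ(x)=j) = γ x j` (rows of `γ` sum to 1).  `Qhat` is a predicate on
occupancy patterns `(σ⁻¹(j))_j` depending only on coordinates `j ≠ i`.  Then
`P(B_i = k+1, Q) = (1/(k+1)) ∑_{l∈[m]} γ l i · P^{[m]∖{l}}(B_i = k, Q)`,
where `P^{[m]∖{l}}` is the analogous measure on functions `[m]∖{l} → [n]`
(with `B_i` and `Q` reinterpreted there via `σ⁻¹(j) ∩ ([m]∖{l})`). -/
theorem urn_recursion (m n : ℕ) (γ : Fin m → Fin n → ℝ)
    (hγ : ∀ x j, 0 ≤ γ x j) (hrow : ∀ x, ∑ j, γ x j = 1)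
    (i : Fin n) (k : ℕ)
    (Qhat : (Fin n → Finset (Fin m)) → Prop)
    (hQ : ∀ S T : Fin n → Finset (Fin m),
      (∀ j, j ≠ i → S j = T j) → (Qhat S ↔ Qhat T)) :
    (∑ σ ∈ univ.filter (fun σ : Fin m → Fin n =>
        (univ.filter (fun x => σ x = i)).card = k + 1 ∧
        Qhat (fun j => univ.filter (fun x => σ x = j))),
      ∏ x, γ x (σ x)) =
    (1 / ((k : ℝ) + 1)) * ∑ l : Fin m, γ l i *
      (∑ τ ∈ univ.filter (fun τ : {x : Fin m // x ≠ l} → Fin n =>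
          (univ.filter (fun x : {x : Fin m // x ≠ l} => τ x = i)).card = k ∧
          Qhat (fun j =>
            (univ.filter (fun x : {x : Fin m // x ≠ l} => τ x = j)).image
              Subtype.val)),
        ∏ x : {x : Fin m // x ≠ l}, γ x.1 (τ x)) :=
  urn_recursion_general m n γ i k Qhat hQ
end

section
/- There exist a finite bipartite graph G = (V ∪ K, E) and bounds l, u ∈ ℕ^K such that the generating polynomial ∑_k s_k x^k of valid G-maps does not have all real roots. Concretely, for V = {y, v, w}, K = {1}, E all three pairs {y,1},{v,1},{w,1}, l₁ = 1, u₁ = 3, the polynomial ∑_{k=0}^{3} s_k x^k = 3x + 3x² + x³ has a nonreal root. -/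
open Finset
open scoped Classical

/-!
A map is valid exactly when it sends at least one vertex to `1`, so `s₀ = 0` and
`s_k = (3 choose k)` for `k ≥ 1`: the polynomial is `(1 + x)³ - 1`, whose roots other than `0`
are `ω - 1` for the two primitive cube roots of unity `ω`.
-/

open Complex in
theorem sq_add_three_mul_add_three_eq_zero :
    ((-3 + √3 * I) / 2) ^ 2 + 3 * ((-3 + √3 * I) / 2) + 3 = 0 := by
  have hsqrt : (√3 : ℂ) ^ 2 = 3 := by exact_mod_cast Real.sq_sqrt (by norm_num : (0 : ℝ) ≤ 3)
  linear_combination (-1 / 4 : ℂ) * hsqrt + ((√3 : ℂ) ^ 2 / 4) * I_sq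

/-- The generating polynomial of valid `G`-maps need not have all real
roots: for `V = {y,v,w}`, `K = {1}`, all three pairs edges, `l₁ = 1`,
`u₁ = 3`, one has `∑ s_k x^k = 3x + 3x² + x³`, which has a nonreal root. -/
theorem valid_Gmaps_poly_nonreal_root (s : ℕ → ℕ)
    (hs : ∀ k, s k = (univ.filter (fun f : Fin 3 → Option (Fin 1) =>
        (∀ j : Fin 1, 1 ≤ (univ.filter (fun v => f v = some j)).card ∧
          (univ.filter (fun v => f v = some j)).card ≤ 3) ∧
        (univ.filter (fun v => (f v).isSome)).card = k)).card) :
    (∀ z : ℂ, ∑ k ∈ Finset.range 4, (s k : ℂ) * z ^ k =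
      3 * z + 3 * z ^ 2 + z ^ 3) ∧
    ∃ z : ℂ, z.im ≠ 0 ∧ ∑ k ∈ Finset.range 4, (s k : ℂ) * z ^ k = 0 := by
  obtain ⟨h0, h1, h2, h3⟩ : s 0 = 0 ∧ s 1 = 3 ∧ s 2 = 3 ∧ s 3 = 1 := by
    simp only [hs]; decide
  have hpoly : ∀ z : ℂ, ∑ k ∈ Finset.range 4, (s k : ℂ) * z ^ k =
      3 * z + 3 * z ^ 2 + z ^ 3 := by
    intro z
    simp only [sum_range_succ, sum_range_zero, h0, h1, h2, h3]
    push_cast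
    ring
  refine ⟨hpoly, (-3 + √3 * Complex.I) / 2, ?_, ?_⟩
  · simp
  · rw [hpoly]
    linear_combination ((-3 + √3 * Complex.I) / 2) * sq_add_three_mul_add_three_eq_zero
end
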